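/- Let μₙ be an eigenvalue of L(q,α,β), let φ(·,λ) for λ ∈ ℝ be the solution of −y'' + q y = λ y on [0,π] with φ(0,λ) = sin α, φ'(0,λ) = −cos α, let ψₙ be the solution with ψₙ(π) = sin β, ψₙ'(π) = −cos β, and suppose φ(·,μₙ) = cₙ·ψₙ on [0,π] with a nonzero constant cₙ. Let Φ(λ) = φ(π,λ)·cos β + φ'(π,λ)·sin β and assume Φ is differentiable at μₙ with derivative Φ̇(μₙ). Then the norming constant aₙ = ∫₀^π φ(x,μₙ)² dx satisfies aₙ = −cₙ·Φ̇(μₙ). -/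

import Mathlib

/-!
The Lagrange identity for `φ(·, λ)` and `ψₙ` (whose Wronskian vanishes at `0` and equals `-Φ(λ)`
at `π`) gives `Φ(λ) = -(λ - μₙ) ∫₀^π φ(x, λ) ψₙ(x) dx`. A Gronwall estimate for the integrable
potential makes `φ(·, λ)` depend Lipschitz-continuously on `λ`, so the integral is continuous in
`λ` and `Φ̇(μₙ) = -∫₀^π φ(x, μₙ) ψₙ(x) dx = -aₙ / cₙ`.
-/

open Real MeasureTheory Set

noncomputable section

/-- `y` (with derivative `y'`) solves `-y'' + Q y = μ y` on `[0, π]`: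
`y` is differentiable with derivative `y'`, and
`y' x = y' 0 + ∫ t in 0..x, (Q t - μ) * y t` for all `x ∈ [0, π]`. -/
def IsSol (Q : ℝ → ℝ) (μ : ℝ) (y y' : ℝ → ℝ) : Prop :=
  (∀ x ∈ Set.Icc (0 : ℝ) π, HasDerivAt y (y' x) x) ∧
  (∀ x ∈ Set.Icc (0 : ℝ) π, y' x = y' 0 + ∫ t in (0 : ℝ)..x, (Q t - μ) * y t)

/-- `μ` is an eigenvalue of the Sturm–Liouville problem `L(Q, γ, δ)`. -/
def IsEigenvalue (Q : ℝ → ℝ) (γ δ : ℝ) (μ : ℝ) : Prop :=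
  ∃ y y' : ℝ → ℝ, IsSol Q μ y y' ∧
    (∃ x ∈ Set.Icc (0 : ℝ) π, y x ≠ 0) ∧
    y 0 * Real.cos γ + y' 0 * Real.sin γ = 0 ∧
    y π * Real.cos δ + y' π * Real.sin δ = 0

open intervalIntegral

lemma MeasureTheory.IntegrableOn.intervalIntegrable_of_mem_Icc {f : ℝ → ℝ} {a b s t : ℝ}
    (hf : IntegrableOn f (Icc a b)) (hs : s ∈ Icc a b) (ht : t ∈ Icc a b) :
    IntervalIntegrable f volume s t :=
  (hf.mono_set (uIcc_subset_Icc hs ht)).intervalIntegrable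

lemma AbsolutelyContinuousOnInterval.congr {f g : ℝ → ℝ} {a b : ℝ}
    (hf : AbsolutelyContinuousOnInterval f a b) (hfg : EqOn f g (uIcc a b)) :
    AbsolutelyContinuousOnInterval g a b := by
  refine Filter.Tendsto.congr' ?_ hf
  filter_upwards [Filter.mem_inf_of_right (Filter.mem_principal_self _)] with E hE
  exact Finset.sum_congr rfl fun i hi => by rw [hfg (hE.1 i hi).1, hfg (hE.1 i hi).2]

lemma absolutelyContinuousOnInterval_of_eq_add_integral {f g : ℝ → ℝ} {a b : ℝ}
    (hg : IntervalIntegrable g volume a b) (hf : ∀ x ∈ uIcc a b, f x = f a + ∫ t in a..x, g t) :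
    AbsolutelyContinuousOnInterval f a b :=
  AbsolutelyContinuousOnInterval.congr
    (((LipschitzWith.const (f a)).lipschitzOnWith.absolutelyContinuousOnInterval).add
      (hg.absolutelyContinuousOnInterval_intervalIntegral left_mem_uIcc))
    fun x hx => (hf x hx).symm

theorem HasDerivAt.eq_of_eqOn_Icc {f g : ℝ → ℝ} {f' g' a b x : ℝ} (hab : a < b)
    (hx : x ∈ Icc a b) (hfg : EqOn f g (Icc a b)) (hf : HasDerivAt f f' x)
    (hg : HasDerivAt g g' x) : f' = g' :=
  (uniqueDiffOn_Icc hab x hx).eq_deriv _ hf.hasDerivWithinAt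
    (hg.hasDerivWithinAt.congr hfg (hfg hx))

theorem hasDerivAt_of_forall_eq_sub_mul {f g : ℝ → ℝ} {a : ℝ}
    (hf : ∀ x, f x = (x - a) * g x) (hg : ContinuousAt g a) : HasDerivAt f (g a) a := by
  rw [hasDerivAt_iff_tendsto_slope]
  refine (hg.tendsto.mono_left nhdsWithin_le_nhds).congr' ?_
  filter_upwards [self_mem_nhdsWithin] with x hx
  rw [slope_def_field, hf, hf, sub_self, zero_mul, sub_zero,
    mul_div_cancel_left₀ _ (sub_ne_zero.2 hx)]

section Gronwall

variable {κ u : ℝ → ℝ} {a b C : ℝ}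

lemma integral_le_integral_of_nonneg_of_le (hκ : IntegrableOn κ (Icc a b))
    (hκ0 : ∀ t ∈ Icc a b, 0 ≤ κ t) {s x : ℝ} (hs : a ≤ s) (hsx : s ≤ x) (hx : x ≤ b) :
    ∫ t in a..s, κ t ≤ ∫ t in a..x, κ t :=
  integral_mono_interval le_rfl hs hsx
    ((ae_restrict_iff' measurableSet_Ioc).2
      (ae_of_all _ fun t ht => hκ0 t ⟨ht.1.le, ht.2.trans hx⟩))
    (hκ.intervalIntegrable_of_mem_Icc ⟨le_rfl, hs.trans (hsx.trans hx)⟩ ⟨hs.trans hsx, hx⟩)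

/-- One Gronwall step: as `∫ t in s..x, κ t ≤ 1 / 2`, the maximum of `u` on `[s, x]` absorbs its
own contribution to the integral. -/
lemma le_two_mul_add_of_le_add_integral (hκ : IntegrableOn κ (Icc a b))
    (hκ0 : ∀ t ∈ Icc a b, 0 ≤ κ t) (hu : ContinuousOn u (Icc a b))
    (hu0 : ∀ x ∈ Icc a b, 0 ≤ u x)
    (hbound : ∀ x ∈ Icc a b, u x ≤ C + ∫ t in a..x, κ t * u t)
    {s x B : ℝ} (hs : a ≤ s) (hsx : s ≤ x) (hx : x ≤ b) (hB : ∀ y ∈ Icc a s, u y ≤ B)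
    (hsmall : ∫ t in s..x, κ t ≤ 1 / 2) :
    u x ≤ 2 * C + 2 * (∫ t in a..s, κ t) * B := by
  have hsx_sub : Icc s x ⊆ Icc a b := Icc_subset_Icc hs hx
  obtain ⟨z, hz, hzmax⟩ :=
    isCompact_Icc.exists_isMaxOn (nonempty_Icc.2 hsx) (hu.mono hsx_sub)
  have haI : a ∈ Icc a b := ⟨le_rfl, hs.trans (hsx.trans hx)⟩
  have hsI : s ∈ Icc a b := hsx_sub (left_mem_Icc.2 hsx)
  have hzI : z ∈ Icc a b := hsx_sub hz
  have hxI : x ∈ Icc a b := hsx_sub (right_mem_Icc.2 hsx)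
  have hκu : IntegrableOn (fun t => κ t * u t) (Icc a b) := hκ.mul_continuousOn hu isCompact_Icc
  have hκ_uz : IntegrableOn (fun t => κ t * u z) (Icc a b) := hκ.mul_const _
  have hκB : IntegrableOn (fun t => κ t * B) (Icc a b) := hκ.mul_const _
  have hhead : ∫ t in a..s, κ t * u t ≤ (∫ t in a..s, κ t) * B := by
    rw [← intervalIntegral.integral_mul_const]
    refine integral_mono_on hs (hκu.intervalIntegrable_of_mem_Icc haI hsI)
      (hκB.intervalIntegrable_of_mem_Icc haI hsI) fun t ht => ?_
    exact mul_le_mul_of_nonneg_left (hB t ht) (hκ0 t ⟨ht.1, ht.2.trans hsI.2⟩)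
  have htail : ∫ t in s..z, κ t * u t ≤ u z / 2 := by
    have hκsz : ∫ t in s..z, κ t ≤ 1 / 2 := by
      have hzx : 0 ≤ ∫ t in z..x, κ t :=
        integral_nonneg hz.2 fun t ht => hκ0 t ⟨hzI.1.trans ht.1, ht.2.trans hx⟩
      rw [← integral_add_adjacent_intervals (hκ.intervalIntegrable_of_mem_Icc hsI hzI)
        (hκ.intervalIntegrable_of_mem_Icc hzI hxI)] at hsmall
      linarith
    calc ∫ t in s..z, κ t * u t ≤ ∫ t in s..z, κ t * u z :=
          integral_mono_on hz.1 (hκu.intervalIntegrable_of_mem_Icc hsI hzI)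
            (hκ_uz.intervalIntegrable_of_mem_Icc hsI hzI) fun t ht =>
              mul_le_mul_of_nonneg_left (hzmax ⟨ht.1, ht.2.trans hz.2⟩)
                (hκ0 t ⟨hs.trans ht.1, ht.2.trans hzI.2⟩)
      _ = (∫ t in s..z, κ t) * u z := intervalIntegral.integral_mul_const _ _
      _ ≤ 1 / 2 * u z := mul_le_mul_of_nonneg_right hκsz (hu0 z hzI)
      _ = u z / 2 := by ring
  have hz_bound := hbound z hzI
  rw [← integral_add_adjacent_intervals (hκu.intervalIntegrable_of_mem_Icc haI hsI)
    (hκu.intervalIntegrable_of_mem_Icc hsI hzI)] at hz_bound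
  have : u x ≤ u z := hzmax (right_mem_Icc.2 hsx)
  linarith

/-- Each step cuts `[a, x]` where the primitive of `κ` reaches `n / 2`. -/
lemma le_mul_pow_of_le_add_integral (hκ : IntegrableOn κ (Icc a b))
    (hκ0 : ∀ t ∈ Icc a b, 0 ≤ κ t) (hu : ContinuousOn u (Icc a b))
    (hu0 : ∀ x ∈ Icc a b, 0 ≤ u x)
    (hbound : ∀ x ∈ Icc a b, u x ≤ C + ∫ t in a..x, κ t * u t) (n : ℕ) {x : ℝ}
    (hx : x ∈ Icc a b) (hKx : ∫ t in a..x, κ t ≤ n / 2) :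
    u x ≤ C * (2 * (2 * (∫ t in a..b, κ t) + 1) ^ n) := by
  have haI : a ∈ Icc a b := ⟨le_rfl, hx.1.trans hx.2⟩
  have hC : 0 ≤ C := by
    have := hbound a haI
    rw [integral_same, add_zero] at this
    linarith [hu0 a haI]
  have hKb : 0 ≤ ∫ t in a..b, κ t :=
    integral_same (f := κ) (a := a) ▸
      integral_le_integral_of_nonneg_of_le hκ hκ0 le_rfl haI.2 le_rfl
  set R := 2 * (∫ t in a..b, κ t) + 1
  have hR : 1 ≤ R := by linarith
  have hK_cont : ContinuousOn (fun x => ∫ t in a..x, κ t) (Icc a b) := by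
    have := continuousOn_primitive_interval (hκ.mono_set (uIcc_subset_Icc haI ⟨haI.2, le_rfl⟩))
    rwa [uIcc_of_le haI.2] at this
  induction n generalizing x with
  | zero =>
    have := le_two_mul_add_of_le_add_integral hκ hκ0 hu hu0 hbound le_rfl hx.1 hx.2
      (B := u a) (fun y hy => by rw [le_antisymm hy.2 hy.1])
      (by rw [Nat.cast_zero, zero_div] at hKx; exact hKx.trans (by norm_num))
    rw [integral_same] at this
    simpa [mul_comm] using this
  | succ n ih =>
    by_cases hxn : ∫ t in a..x, κ t ≤ n / 2
    · calc u x ≤ C * (2 * R ^ n) := ih hx hxn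
        _ ≤ C * (2 * R ^ (n + 1)) := by gcongr; exact n.le_succ
    obtain ⟨s, hs, hKs⟩ : ∃ s ∈ Icc a x, ∫ t in a..s, κ t = n / 2 :=
      intermediate_value_Icc hx.1 (hK_cont.mono (Icc_subset_Icc_right hx.2))
        ⟨integral_same (f := κ) (a := a) ▸ by positivity, (not_le.1 hxn).le⟩
    have hsI : s ∈ Icc a b := ⟨hs.1, hs.2.trans hx.2⟩
    have hstep := le_two_mul_add_of_le_add_integral hκ hκ0 hu hu0 hbound hs.1 hs.2 hx.2
      (B := C * (2 * R ^ n))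
      (fun y hy => ih ⟨hy.1, hy.2.trans hsI.2⟩
        (hKs ▸ integral_le_integral_of_nonneg_of_le hκ hκ0 hy.1 hy.2 hsI.2))
      (by
        rw [← integral_interval_sub_left (hκ.intervalIntegrable_of_mem_Icc haI hx)
          (hκ.intervalIntegrable_of_mem_Icc haI hsI), hKs]
        push_cast at hKx
        linarith)
    have hKsb : (∫ t in a..s, κ t) * (C * (2 * R ^ n)) ≤ (∫ t in a..b, κ t) * (C * (2 * R ^ n)) :=
      mul_le_mul_of_nonneg_right (integral_le_integral_of_nonneg_of_le hκ hκ0 hs.1 hsI.2 le_rfl)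
        (by positivity)
    have hRn : 2 * C ≤ 2 * C * R ^ n :=
      le_mul_of_one_le_right (by positivity) (one_le_pow₀ hR)
    calc u x ≤ 2 * C + 2 * (∫ t in a..s, κ t) * (C * (2 * R ^ n)) := hstep
      _ ≤ 2 * C * R ^ n + 2 * (∫ t in a..b, κ t) * (C * (2 * R ^ n)) := by linarith
      _ = C * (2 * R ^ (n + 1)) := by ring

theorem le_mul_of_le_add_integral (hκ : IntegrableOn κ (Icc a b))
    (hκ0 : ∀ t ∈ Icc a b, 0 ≤ κ t) (hu : ContinuousOn u (Icc a b))
    (hu0 : ∀ x ∈ Icc a b, 0 ≤ u x)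
    (hbound : ∀ x ∈ Icc a b, u x ≤ C + ∫ t in a..x, κ t * u t) {x : ℝ} (hx : x ∈ Icc a b) :
    u x ≤ C * (2 * (2 * (∫ t in a..b, κ t) + 1) ^ ⌈2 * ∫ t in a..b, κ t⌉₊) :=
  le_mul_pow_of_le_add_integral hκ hκ0 hu hu0 hbound _ hx <| by
    have := Nat.le_ceil (2 * ∫ t in a..b, κ t)
    linarith [integral_le_integral_of_nonneg_of_le hκ hκ0 hx.1 hx.2 le_rfl]

end Gronwall

lemma uIcc_zero_pi : uIcc 0 π = Icc 0 π := uIcc_of_le pi_pos.le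

def wronskian (y y' z z' : ℝ → ℝ) (x : ℝ) : ℝ := y x * z' x - y' x * z x

namespace IsSol

variable {Q : ℝ → ℝ} {μ : ℝ} {y y' : ℝ → ℝ}

lemma continuousOn (h : IsSol Q μ y y') : ContinuousOn y (Icc 0 π) :=
  fun x hx => (h.1 x hx).continuousAt.continuousWithinAt

lemma integrableOn_rhs (hQ : IntegrableOn Q (Icc 0 π)) (h : IsSol Q μ y y') :
    IntegrableOn (fun t => (Q t - μ) * y t) (Icc 0 π) :=
  (hQ.sub (integrableOn_const measure_Icc_lt_top.ne)).mul_continuousOn h.continuousOn isCompact_Icc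

lemma absolutelyContinuousOnInterval_deriv (hQ : IntegrableOn Q (Icc 0 π))
    (h : IsSol Q μ y y') : AbsolutelyContinuousOnInterval y' 0 π :=
  absolutelyContinuousOnInterval_of_eq_add_integral
    ((h.integrableOn_rhs hQ).mono_set uIcc_zero_pi.subset).intervalIntegrable
    fun x hx => h.2 x (uIcc_zero_pi ▸ hx)

lemma continuousOn_deriv (hQ : IntegrableOn Q (Icc 0 π)) (h : IsSol Q μ y y') :
    ContinuousOn y' (Icc 0 π) :=
  uIcc_zero_pi ▸ (h.absolutelyContinuousOnInterval_deriv hQ).continuousOn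

lemma integral_deriv (hQ : IntegrableOn Q (Icc 0 π)) (h : IsSol Q μ y y') {x : ℝ}
    (hx : x ∈ Icc 0 π) : ∫ t in 0..x, y' t = y x - y 0 := by
  have hsub : uIcc 0 x ⊆ Icc 0 π := uIcc_subset_Icc (left_mem_Icc.2 pi_pos.le) hx
  exact integral_eq_sub_of_hasDerivAt (fun t ht => h.1 t (hsub ht))
    ((h.continuousOn_deriv hQ).mono hsub).intervalIntegrable

lemma absolutelyContinuousOnInterval (hQ : IntegrableOn Q (Icc 0 π)) (h : IsSol Q μ y y') :
    AbsolutelyContinuousOnInterval y 0 π :=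
  absolutelyContinuousOnInterval_of_eq_add_integral
    ((h.continuousOn_deriv hQ).mono uIcc_zero_pi.subset).intervalIntegrable
    fun x hx => by rw [h.integral_deriv hQ (uIcc_zero_pi ▸ hx), add_sub_cancel]

lemma ae_hasDerivAt_deriv (hQ : IntegrableOn Q (Icc 0 π)) (h : IsSol Q μ y y') :
    ∀ᵐ x, x ∈ Ioo 0 π → HasDerivAt y' ((Q x - μ) * y x) x := by
  filter_upwards [((h.integrableOn_rhs hQ).mono_set uIcc_zero_pi.subset).intervalIntegrable
    |>.ae_hasDerivAt_integral] with x hx hxI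
  have hxI' : x ∈ uIcc 0 π := uIcc_zero_pi ▸ Ioo_subset_Icc_self hxI
  refine ((hx hxI' 0 left_mem_uIcc).const_add (y' 0)).congr_of_eventuallyEq ?_
  filter_upwards [Ioo_mem_nhds hxI.1 hxI.2] with t ht
  exact h.2 t (Ioo_subset_Icc_self ht)

theorem wronskian_sub_wronskian (hQ : IntegrableOn Q (Icc 0 π)) {ν : ℝ} {z z' : ℝ → ℝ}
    (hy : IsSol Q μ y y') (hz : IsSol Q ν z z') :
    wronskian y y' z z' π - wronskian y y' z z' 0 = (μ - ν) * ∫ x in 0..π, y x * z x := by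
  have hW : AbsolutelyContinuousOnInterval (wronskian y y' z z') 0 π :=
    ((hy.absolutelyContinuousOnInterval hQ).mul (hz.absolutelyContinuousOnInterval_deriv hQ)).sub
      ((hy.absolutelyContinuousOnInterval_deriv hQ).mul (hz.absolutelyContinuousOnInterval hQ))
  rw [← hW.integral_deriv_eq_sub, ← intervalIntegral.integral_const_mul]
  refine integral_congr_ae ?_
  filter_upwards [hy.ae_hasDerivAt_deriv hQ, hz.ae_hasDerivAt_deriv hQ, Measure.ae_ne volume π]
    with x hy'' hz'' hxπ hx
  rw [uIoc_of_le pi_pos.le] at hx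
  have hxI : x ∈ Ioo 0 π := ⟨hx.1, lt_of_le_of_ne hx.2 hxπ⟩
  have hxI' : x ∈ Icc 0 π := Ioo_subset_Icc_self hxI
  have hWx : HasDerivAt (wronskian y y' z z')
      (y' x * z' x + y x * ((Q x - ν) * z x) - ((Q x - μ) * y x * z x + y' x * z' x)) x :=
    ((hy.1 x hxI').mul (hz'' hxI)).sub ((hy'' hxI).mul (hz.1 x hxI'))
  rw [hWx.deriv]
  ring

end IsSol

lemma abs_mul_sub_mul_le (q : ℝ) {μ ν y z M : ℝ} (hz : |z| ≤ M) (hμν : |μ - ν| ≤ 1) :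
    |(q - μ) * y - (q - ν) * z| ≤ (|q| + |ν| + 1) * |y - z| + |μ - ν| * M := by
  have hqμ : |q - μ| ≤ |q| + |ν| + 1 := by
    linarith [abs_sub q μ, abs_sub_abs_le_abs_sub μ ν]
  calc |(q - μ) * y - (q - ν) * z| = |(q - μ) * (y - z) + (ν - μ) * z| := by ring_nf
    _ ≤ |q - μ| * |y - z| + |μ - ν| * |z| := by
      rw [← abs_mul, abs_sub_comm μ ν, ← abs_mul]; exact abs_add_le _ _
    _ ≤ (|q| + |ν| + 1) * |y - z| + |μ - ν| * M := by gcongr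

namespace IsSol

variable {Q : ℝ → ℝ} {μ ν : ℝ} {y y' z z' : ℝ → ℝ}

lemma sub_eq_integral_sub (hQ : IntegrableOn Q (Icc 0 π)) (hy : IsSol Q μ y y')
    (hz : IsSol Q ν z z') (h0 : y 0 = z 0) {x : ℝ} (hx : x ∈ Icc 0 π) :
    y x - z x = ∫ t in 0..x, (y' t - z' t) := by
  have h0I : (0 : ℝ) ∈ Icc 0 π := left_mem_Icc.2 pi_pos.le
  rw [integral_sub ((hy.continuousOn_deriv hQ).integrableOn_Icc.intervalIntegrable_of_mem_Icc
    h0I hx) ((hz.continuousOn_deriv hQ).integrableOn_Icc.intervalIntegrable_of_mem_Icc h0I hx),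
    hy.integral_deriv hQ hx, hz.integral_deriv hQ hx, h0]
  ring

lemma deriv_sub_eq_integral_sub (hQ : IntegrableOn Q (Icc 0 π)) (hy : IsSol Q μ y y')
    (hz : IsSol Q ν z z') (h0' : y' 0 = z' 0) {x : ℝ} (hx : x ∈ Icc 0 π) :
    y' x - z' x = ∫ t in 0..x, ((Q t - μ) * y t - (Q t - ν) * z t) := by
  have h0I : (0 : ℝ) ∈ Icc 0 π := left_mem_Icc.2 pi_pos.le
  rw [hy.2 x hx, hz.2 x hx, h0', integral_sub
    ((hy.integrableOn_rhs hQ).intervalIntegrable_of_mem_Icc h0I hx)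
    ((hz.integrableOn_rhs hQ).intervalIntegrable_of_mem_Icc h0I hx)]
  ring

lemma abs_sub_add_abs_sub_le (hQ : IntegrableOn Q (Icc 0 π)) (hy : IsSol Q μ y y')
    (hz : IsSol Q ν z z') (h0 : y 0 = z 0) (h0' : y' 0 = z' 0) {M : ℝ}
    (hM : ∀ t ∈ Icc 0 π, |z t| ≤ M) (hμν : |μ - ν| ≤ 1) {x : ℝ} (hx : x ∈ Icc 0 π) :
    |y x - z x| + |y' x - z' x| ≤
      |μ - ν| * M * π + ∫ t in 0..x, (|Q t| + (|ν| + 2)) * (|y t - z t| + |y' t - z' t|) := by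
  have h0I : (0 : ℝ) ∈ Icc 0 π := left_mem_Icc.2 pi_pos.le
  have hM0 : 0 ≤ M := (abs_nonneg _).trans (hM 0 h0I)
  have hwc : ContinuousOn (fun t => y t - z t) (Icc 0 π) := hy.continuousOn.sub hz.continuousOn
  have hw'c : ContinuousOn (fun t => y' t - z' t) (Icc 0 π) :=
    (hy.continuousOn_deriv hQ).sub (hz.continuousOn_deriv hQ)
  have hrhs : IntegrableOn (fun t => (Q t - μ) * y t - (Q t - ν) * z t) (Icc 0 π) :=
    (hy.integrableOn_rhs hQ).sub (hz.integrableOn_rhs hQ)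
  have hκ : IntegrableOn (fun t => |Q t| + (|ν| + 2)) (Icc 0 π) :=
    hQ.abs.add (integrableOn_const measure_Icc_lt_top.ne)
  have hw'_abs : IntegrableOn (fun t => |y' t - z' t|) (Icc 0 π) := hw'c.abs.integrableOn_Icc
  have hrhs_abs : IntegrableOn (fun t => |(Q t - μ) * y t - (Q t - ν) * z t|) (Icc 0 π) :=
    hrhs.abs
  have hκu : IntegrableOn (fun t => (|Q t| + (|ν| + 2)) * (|y t - z t| + |y' t - z' t|))
      (Icc 0 π) := hκ.mul_continuousOn (hwc.abs.add hw'c.abs) isCompact_Icc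
  have hpt : ∀ t ∈ Icc 0 π, |y' t - z' t| + |(Q t - μ) * y t - (Q t - ν) * z t| ≤
      (|Q t| + (|ν| + 2)) * (|y t - z t| + |y' t - z' t|) + |μ - ν| * M := fun t ht => by
    nlinarith [abs_mul_sub_mul_le (Q t) (y := y t) (hM t ht) hμν, abs_nonneg (y t - z t),
      abs_nonneg (y' t - z' t), abs_nonneg (Q t), abs_nonneg ν]
  calc |y x - z x| + |y' x - z' x|
      ≤ (∫ t in 0..x, |y' t - z' t|) + ∫ t in 0..x, |(Q t - μ) * y t - (Q t - ν) * z t| := by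
        rw [sub_eq_integral_sub hQ hy hz h0 hx, deriv_sub_eq_integral_sub hQ hy hz h0' hx]
        exact add_le_add (abs_integral_le_integral_abs hx.1) (abs_integral_le_integral_abs hx.1)
    _ = ∫ t in 0..x, (|y' t - z' t| + |(Q t - μ) * y t - (Q t - ν) * z t|) :=
        (intervalIntegral.integral_add (hw'_abs.intervalIntegrable_of_mem_Icc h0I hx)
          (hrhs_abs.intervalIntegrable_of_mem_Icc h0I hx)).symm
    _ ≤ ∫ t in 0..x, ((|Q t| + (|ν| + 2)) * (|y t - z t| + |y' t - z' t|) + |μ - ν| * M) :=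
        integral_mono_on hx.1 ((hw'_abs.add hrhs_abs).intervalIntegrable_of_mem_Icc h0I hx)
          ((hκu.intervalIntegrable_of_mem_Icc h0I hx).add intervalIntegrable_const)
          fun t ht => hpt t ⟨ht.1, ht.2.trans hx.2⟩
    _ = (∫ t in 0..x, (|Q t| + (|ν| + 2)) * (|y t - z t| + |y' t - z' t|)) + x * (|μ - ν| * M) := by
        rw [intervalIntegral.integral_add (hκu.intervalIntegrable_of_mem_Icc h0I hx)
          intervalIntegrable_const, intervalIntegral.integral_const, sub_zero, smul_eq_mul]
    _ ≤ |μ - ν| * M * π + ∫ t in 0..x, (|Q t| + (|ν| + 2)) * (|y t - z t| + |y' t - z' t|) := by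
        nlinarith [mul_nonneg (abs_nonneg (μ - ν)) hM0, hx.2]

theorem exists_abs_sub_le (hQ : IntegrableOn Q (Icc 0 π)) (hz : IsSol Q ν z z') :
    ∃ L, ∀ μ y y', IsSol Q μ y y' → y 0 = z 0 → y' 0 = z' 0 → |μ - ν| ≤ 1 →
      ∀ x ∈ Icc 0 π, |y x - z x| ≤ L * |μ - ν| := by
  obtain ⟨M, hM⟩ := isCompact_Icc.exists_bound_of_continuousOn hz.continuousOn
  have hκ : IntegrableOn (fun t => |Q t| + (|ν| + 2)) (Icc 0 π) :=
    hQ.abs.add (integrableOn_const measure_Icc_lt_top.ne)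
  set K := ∫ t in 0..π, (|Q t| + (|ν| + 2))
  refine ⟨M * π * (2 * (2 * K + 1) ^ ⌈2 * K⌉₊), fun μ y y' hy h0 h0' hμν x hx => ?_⟩
  have hu := le_mul_of_le_add_integral (u := fun t => |y t - z t| + |y' t - z' t|) hκ
    (fun t _ => by positivity)
    ((hy.continuousOn.sub hz.continuousOn).abs.add
      ((hy.continuousOn_deriv hQ).sub (hz.continuousOn_deriv hQ)).abs)
    (fun t _ => by positivity) (fun t ht => hy.abs_sub_add_abs_sub_le hQ hz h0 h0' hM hμν ht) hx
  calc |y x - z x| ≤ |y x - z x| + |y' x - z' x| := le_add_of_nonneg_right (abs_nonneg _)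
    _ ≤ |μ - ν| * M * π * (2 * (2 * K + 1) ^ ⌈2 * K⌉₊) := hu
    _ = M * π * (2 * (2 * K + 1) ^ ⌈2 * K⌉₊) * |μ - ν| := by ring

end IsSol

theorem continuousAt_integral_sol_mul {Q : ℝ → ℝ} (hQ : IntegrableOn Q (Icc 0 π))
    {φ φ' : ℝ → ℝ → ℝ} {ν : ℝ} (hsol : ∀ μ, IsSol Q μ (φ μ) (φ' μ))
    (h0 : ∀ μ, φ μ 0 = φ ν 0) (h0' : ∀ μ, φ' μ 0 = φ' ν 0) {f : ℝ → ℝ}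
    (hf : IntegrableOn f (Icc 0 π)) :
    ContinuousAt (fun μ => ∫ x in 0..π, φ μ x * f x) ν := by
  obtain ⟨L, hL⟩ := (hsol ν).exists_abs_sub_le hQ
  have hint (μ : ℝ) : IntervalIntegrable (fun x => φ μ x * f x) volume 0 π :=
    ((hf.continuousOn_mul (hsol μ).continuousOn isCompact_Icc).mono_set
      uIcc_zero_pi.subset).intervalIntegrable
  refine continuousAt_of_locally_lipschitz one_pos (L * ∫ x in 0..π, |f x|) fun μ hμ => ?_
  rw [Real.dist_eq] at hμ ⊢
  rw [Real.dist_eq, ← intervalIntegral.integral_sub (hint μ) (hint ν)]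
  calc |∫ x in 0..π, (φ μ x * f x - φ ν x * f x)|
      ≤ ∫ x in 0..π, L * |μ - ν| * |f x| := by
        have hf_abs : IntegrableOn (fun x => |f x|) (uIcc 0 π) := uIcc_zero_pi ▸ hf.abs
        have hpt : ∀ x ∈ Ioc 0 π, ‖φ μ x * f x - φ ν x * f x‖ ≤ L * |μ - ν| * |f x| := by
          intro x hx
          rw [Real.norm_eq_abs, ← sub_mul, abs_mul]
          exact mul_le_mul_of_nonneg_right (hL μ (φ μ) (φ' μ) (hsol μ) (h0 μ) (h0' μ) hμ.le x
            (Ioc_subset_Icc_self hx)) (abs_nonneg _)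
        exact intervalIntegral.norm_integral_le_of_norm_le pi_pos.le (ae_of_all _ hpt)
          (hf_abs.intervalIntegrable.const_mul _)
    _ = L * (∫ x in 0..π, |f x|) * |μ - ν| := by
        rw [intervalIntegral.integral_const_mul]; ring

theorem statement12_general (q : ℝ → ℝ) (hq : IntegrableOn q (Set.Icc (0 : ℝ) π))
    (α β : ℝ)
    (μn : ℝ)
    (φ φ' : ℝ → ℝ → ℝ)
    (hsol : ∀ lam : ℝ, IsSol q lam (φ lam) (φ' lam))
    (h0 : ∀ lam : ℝ, φ lam 0 = Real.sin α)
    (h0' : ∀ lam : ℝ, φ' lam 0 = -Real.cos α)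
    (ψ ψ' : ℝ → ℝ) (hψ : IsSol q μn ψ ψ')
    (hψπ : ψ π = Real.sin β) (hψ'π : ψ' π = -Real.cos β)
    (c : ℝ) (hc : c ≠ 0) (heq : ∀ x ∈ Set.Icc (0 : ℝ) π, φ μn x = c * ψ x) :
    (∫ x in (0 : ℝ)..π, (φ μn x) ^ 2)
      = -c * deriv (fun lam => φ lam π * Real.cos β + φ' lam π * Real.sin β) μn := by
  have h0I : (0 : ℝ) ∈ Icc 0 π := left_mem_Icc.2 pi_pos.le
  have hψ0 : c * ψ 0 = Real.sin α := by rw [← heq 0 h0I, h0]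
  have hψ'0 : c * ψ' 0 = -Real.cos α := by
    rw [← h0' μn]
    exact (HasDerivAt.eq_of_eqOn_Icc pi_pos h0I (fun x hx => heq x hx)
      ((hsol μn).1 0 h0I) ((hψ.1 0 h0I).const_mul c)).symm
  have hΦ : ∀ lam, φ lam π * Real.cos β + φ' lam π * Real.sin β =
      (lam - μn) * -∫ x in 0..π, φ lam x * ψ x := by
    intro lam
    have hW0 : wronskian (φ lam) (φ' lam) ψ ψ' 0 = 0 := by
      refine mul_left_cancel₀ hc ?_
      rw [wronskian, h0, h0']
      linear_combination Real.sin α * hψ'0 + Real.cos α * hψ0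
    have hW := (hsol lam).wronskian_sub_wronskian hq hψ
    rw [hW0, wronskian, hψπ, hψ'π] at hW
    linear_combination -hW
  have hG := continuousAt_integral_sol_mul hq hsol (fun lam => (h0 lam).trans (h0 μn).symm)
    (fun lam => (h0' lam).trans (h0' μn).symm) hψ.continuousOn.integrableOn_Icc
  rw [(hasDerivAt_of_forall_eq_sub_mul hΦ hG.neg).deriv]
  calc ∫ x in 0..π, φ μn x ^ 2 = ∫ x in 0..π, c * (φ μn x * ψ x) := by
        refine integral_congr fun x hx => ?_
        rw [uIcc_zero_pi] at hx
        simp only [sq]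
        nth_rewrite 2 [heq x hx]
        ring
    _ = -c * -∫ x in 0..π, φ μn x * ψ x := by
        rw [intervalIntegral.integral_const_mul]; ring

theorem statement12 (q : ℝ → ℝ) (hq : IntegrableOn q (Set.Icc (0 : ℝ) π))
    (α β : ℝ) (hα : α ∈ Set.Ioo (0 : ℝ) π) (hβ : β ∈ Set.Ioo (0 : ℝ) π)
    (μn : ℝ) (hμn : IsEigenvalue q α β μn)
    (φ φ' : ℝ → ℝ → ℝ)
    (hsol : ∀ lam : ℝ, IsSol q lam (φ lam) (φ' lam))
    (h0 : ∀ lam : ℝ, φ lam 0 = Real.sin α)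
    (h0' : ∀ lam : ℝ, φ' lam 0 = -Real.cos α)
    (ψ ψ' : ℝ → ℝ) (hψ : IsSol q μn ψ ψ')
    (hψπ : ψ π = Real.sin β) (hψ'π : ψ' π = -Real.cos β)
    (c : ℝ) (hc : c ≠ 0) (heq : ∀ x ∈ Set.Icc (0 : ℝ) π, φ μn x = c * ψ x)
    (hdiff : DifferentiableAt ℝ
      (fun lam => φ lam π * Real.cos β + φ' lam π * Real.sin β) μn) :
    (∫ x in (0 : ℝ)..π, (φ μn x) ^ 2)
      = -c * deriv (fun lam => φ lam π * Real.cos β + φ' lam π * Real.sin β) μn :=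
  statement12_general q hq α β μn φ φ' hsol h0 h0' ψ ψ' hψ hψπ hψ'π c hc heq
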